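/- Conversely, if p_g(0) + p_b(0) = p_l(0) and |p_l(k) − p_l(k−1)| ≤ r_g + r_b for all k = 1,...,h, and the box constraints are inactive (taken as all of ℝ), then there exist sequences p_g, p_b satisfying both ramp constraints |p_g(k)−p_g(k−1)| ≤ r_g, |p_b(k)−p_b(k−1)| ≤ r_b and exact tracking p_g(k) + p_b(k) = p_l(k) for all k ≤ h. -/

import Mathlib

/-! Split every load increment between the two units in the fixed ratio `rg : rb`: unit `g`
follows the load scaled by `rg / (rg + rb)` and unit `b` covers the rest. When `rg + rb = 0`
the load is constant, so the junk value `rg / 0 = 0` does no harm. -/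

lemma abs_mul_div_add_le {a b d : ℝ} (ha : 0 ≤ a) (hd : |d| ≤ a + b) :
    |d * (a / (a + b))| ≤ a := by
  rcases (abs_nonneg d).trans hd |>.eq_or_lt with hab | hab
  · simp [← hab, ha]
  · rw [abs_mul, abs_of_nonneg (div_nonneg ha hab.le)]
    calc |d| * (a / (a + b)) ≤ (a + b) * (a / (a + b)) := by gcongr
      _ = a := mul_div_cancel₀ a hab.ne'

lemma abs_sub_mul_div_add_le {a b d : ℝ} (hb : 0 ≤ b) (hd : |d| ≤ a + b) :
    |d - d * (a / (a + b))| ≤ b := by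
  rcases (abs_nonneg d).trans hd |>.eq_or_lt with hab | hab
  · simp [abs_nonpos_iff.mp (hab ▸ hd), hb]
  · have hsplit : d - d * (a / (a + b)) = d * (b / (b + a)) := by
      rw [add_comm b a]
      field_simp
      ring
    rw [hsplit]
    exact abs_mul_div_add_le hb (add_comm a b ▸ hd)

theorem tracking_exists_when_load_ramp_within_limits
    (h : ℕ) (rg rb pg0 pb0 : ℝ) (pl : ℕ → ℝ)
    (hrg : rg ≥ 0) (hrb : rb ≥ 0)
    (hinit : pg0 + pb0 = pl 0)
    (hload : ∀ k < h, |pl (k + 1) - pl k| ≤ rg + rb) :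
    ∃ pg pb : ℕ → ℝ,
      pg 0 = pg0 ∧ pb 0 = pb0 ∧
      (∀ k < h, |pg (k + 1) - pg k| ≤ rg) ∧
      (∀ k < h, |pb (k + 1) - pb k| ≤ rb) ∧
      (∀ k ≤ h, pg k + pb k = pl k) := by
  set c := rg / (rg + rb)
  set pg : ℕ → ℝ := fun k => pg0 + (pl k - pl 0) * c
  refine ⟨pg, fun k => pl k - pg k, by simp [pg], by simp [pg, ← hinit], fun k hk => ?_,
    fun k hk => ?_, fun k _ => add_sub_cancel _ _⟩
  · have hstep : pg (k + 1) - pg k = (pl (k + 1) - pl k) * c := by ring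
    rw [hstep]
    exact abs_mul_div_add_le hrg (hload k hk)
  · have hstep : pl (k + 1) - pg (k + 1) - (pl k - pg k)
        = (pl (k + 1) - pl k) - (pl (k + 1) - pl k) * c := by ring
    rw [hstep]
    exact abs_sub_mul_div_add_le hrb (hload k hk)
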